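/- Let n ≥ 3 and define, for r > 0 and either choice of sign, E_±(r) = ∫₀^∞ e^{−ry} y^{(n-4)/2} [(y ± 2i)^{(n-4)/2} − (±2i)^{(n-4)/2}] dy, with principal-branch complex powers. Then there is a constant C depending only on n such that |E_±(r)| ≤ C r^{−n/2} for all r ≥ 1. -/

import Mathlib

/-!
For `Re c ≥ 0`, `‖c‖ ≥ 1` and `t ≥ 0` one has `‖c‖ ≤ ‖t + c‖ ≤ ‖c‖ + t`, so the mean value
theorem on `[0, y]` gives `‖(y + c)^a - c^a‖ ≤ |a| ‖c‖^(a-1) (1 + y)^β y` with `β = max (a - 1) 0`.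
The extra factor `y` raises the power of `y` in the integrand by one, and the Gamma integral
`∫₀^∞ y^(s-1) e^(-ry) dy = Γ(s) r^(-s)` with `s = a + 2 = n/2` gives the decay `r^(-n/2)`;
the growth `(1 + y)^β` only adds a term of order `r^(-(s+β)) ≤ r^(-s)`.
-/

open MeasureTheory Complex
open scoped ENNReal RealInnerProductSpace

noncomputable section

/-- The frequency space `ℝ^{n-1}`, on which functions on the paraboloid
`S = {(τ,ξ) : τ = |ξ|²}` are parametrized (via `ξ ↦ (|ξ|², ξ)`). -/
abbrev Spc (n : ℕ) := EuclideanSpace ℝ (Fin (n - 1))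

/-- A dyadic number, an element of `2^ℤ`. -/
def IsDyadic (R : ℝ) : Prop := ∃ k : ℤ, R = 2 ^ k

/-- Membership in the class `𝓛_M` : cylindrically symmetric functions on the paraboloid
supported where `M ≤ |ξ| ≤ 2M`. -/
def CylSupported (n : ℕ) (M : ℝ) (f : Spc n → ℂ) : Prop :=
  (∀ ξ η : Spc n, ‖ξ‖ = ‖η‖ → f ξ = f η) ∧
  ∀ ξ : Spc n, f ξ ≠ 0 → M ≤ ‖ξ‖ ∧ ‖ξ‖ ≤ 2 * M

/-- The adjoint restriction (extension) operator for the paraboloid: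
`(f dσ)^∨(t,x) = ∫ f(|ξ|²,ξ) e^{i(x·ξ + t|ξ|²)} dξ`. -/
def parabExt (n : ℕ) (f : Spc n → ℂ) : ℝ × Spc n → ℂ :=
  fun p => ∫ ξ : Spc n, f ξ * Complex.exp (Complex.I * ((⟪p.2, ξ⟫ + p.1 * ‖ξ‖ ^ 2 : ℝ) : ℂ))

/-- The space-time slab `ℝ × A_R` with `A_R = {x : R/2 ≤ |x| ≤ R}`. -/
def annulus (n : ℕ) (R : ℝ) : Set (ℝ × Spc n) := {p | R / 2 ≤ ‖p.2‖ ∧ ‖p.2‖ ≤ R}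

open Set

lemma rpow_le_rpow_mul_one_add_rpow_max {ρ x y γ : ℝ} (hρ : 1 ≤ ρ) (hρx : ρ ≤ x)
    (hxy : x ≤ ρ + y) : x ^ γ ≤ ρ ^ γ * (1 + y) ^ max γ 0 := by
  have hρ0 : 0 < ρ := by linarith
  have hy : 0 ≤ y := by linarith
  have h1 : 1 ≤ x / ρ := (one_le_div hρ0).2 hρx
  have h2 : x / ρ ≤ 1 + y := by
    rw [div_le_iff₀ hρ0]; nlinarith
  calc x ^ γ = ρ ^ γ * (x / ρ) ^ γ := by
        rw [← Real.mul_rpow hρ0.le (by linarith), mul_div_cancel₀ _ hρ0.ne']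
    _ ≤ ρ ^ γ * (1 + y) ^ max γ 0 := by
        gcongr
        calc (x / ρ) ^ γ ≤ (x / ρ) ^ max γ 0 :=
              Real.rpow_le_rpow_of_exponent_le h1 (le_max_left _ _)
          _ ≤ (1 + y) ^ max γ 0 := by gcongr

lemma one_add_rpow_le_two_rpow_mul {y β : ℝ} (hy : 0 ≤ y) (hβ : 0 ≤ β) :
    (1 + y) ^ β ≤ 2 ^ β * (1 + y ^ β) := by
  rcases le_total y 1 with h | h
  · calc (1 + y) ^ β ≤ 2 ^ β := by gcongr; linarith
      _ ≤ 2 ^ β * (1 + y ^ β) := by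
        have : 0 ≤ y ^ β := by positivity
        nlinarith [Real.rpow_nonneg (zero_le_two : (0:ℝ) ≤ 2) β]
  · calc (1 + y) ^ β ≤ (2 * y) ^ β := by gcongr; linarith
      _ = 2 ^ β * y ^ β := Real.mul_rpow zero_le_two hy
      _ ≤ 2 ^ β * (1 + y ^ β) := by gcongr; linarith

section GammaMajorant

variable {s β r : ℝ}

lemma integrableOn_rpow_mul_exp_neg_mul (hs : 0 < s) (hr : 0 < r) :
    IntegrableOn (fun y : ℝ => y ^ (s - 1) * Real.exp (-(r * y))) (Ioi 0) := by
  simpa [Real.rpow_one, neg_mul] using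
    integrableOn_rpow_mul_exp_neg_mul_rpow (p := 1) (s := s - 1) (by linarith) one_pos hr

lemma rpow_mul_one_add_rpow_mul_exp_le {y : ℝ} (hy : 0 < y) (hβ : 0 ≤ β) :
    y ^ (s - 1) * (1 + y) ^ β * Real.exp (-(r * y)) ≤
      2 ^ β * (y ^ (s - 1) * Real.exp (-(r * y)) + y ^ (s + β - 1) * Real.exp (-(r * y))) := by
  have hsplit : y ^ (s + β - 1) = y ^ (s - 1) * y ^ β := by
    rw [← Real.rpow_add hy]; ring_nf
  calc y ^ (s - 1) * (1 + y) ^ β * Real.exp (-(r * y))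
      ≤ y ^ (s - 1) * (2 ^ β * (1 + y ^ β)) * Real.exp (-(r * y)) := by
        gcongr; exact one_add_rpow_le_two_rpow_mul hy.le hβ
    _ = _ := by rw [hsplit]; ring

lemma integrableOn_rpow_mul_one_add_rpow_mul_exp_neg_mul (hs : 0 < s) (hβ : 0 ≤ β)
    (hr : 0 < r) :
    IntegrableOn (fun y : ℝ => y ^ (s - 1) * (1 + y) ^ β * Real.exp (-(r * y))) (Ioi 0) := by
  refine (((integrableOn_rpow_mul_exp_neg_mul hs hr).add
    (integrableOn_rpow_mul_exp_neg_mul (by linarith : 0 < s + β) hr)).const_mul (2 ^ β)).mono' ?_ ?_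
  · exact (by fun_prop : Measurable _).aestronglyMeasurable
  · filter_upwards [ae_restrict_mem measurableSet_Ioi] with y hy
    rw [Real.norm_of_nonneg (by have := hy.out.le; positivity)]
    exact rpow_mul_one_add_rpow_mul_exp_le hy hβ

lemma integral_rpow_mul_one_add_rpow_mul_exp_neg_mul_le (hs : 0 < s) (hβ : 0 ≤ β)
    (hr : 1 ≤ r) :
    ∫ y in Ioi 0, y ^ (s - 1) * (1 + y) ^ β * Real.exp (-(r * y)) ≤
      2 ^ β * (Real.Gamma s + Real.Gamma (s + β)) * r ^ (-s) := by
  have hr0 : 0 < r := by linarith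
  have hsβ : 0 < s + β := by linarith
  have hΓ : ∀ {t : ℝ}, 0 < t → ∫ y in Ioi 0, y ^ (t - 1) * Real.exp (-(r * y)) =
      r ^ (-t) * Real.Gamma t := fun ht => by
    rw [Real.integral_rpow_mul_exp_neg_mul_Ioi ht hr0, one_div, Real.inv_rpow hr0.le,
      Real.rpow_neg hr0.le]
  calc ∫ y in Ioi 0, y ^ (s - 1) * (1 + y) ^ β * Real.exp (-(r * y))
      ≤ ∫ y in Ioi 0, 2 ^ β * (y ^ (s - 1) * Real.exp (-(r * y)) +
          y ^ (s + β - 1) * Real.exp (-(r * y))) := by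
        refine setIntegral_mono_on (integrableOn_rpow_mul_one_add_rpow_mul_exp_neg_mul hs hβ hr0)
          (((integrableOn_rpow_mul_exp_neg_mul hs hr0).add
            (integrableOn_rpow_mul_exp_neg_mul hsβ hr0)).const_mul _) measurableSet_Ioi
          fun y hy => rpow_mul_one_add_rpow_mul_exp_le hy hβ
    _ = 2 ^ β * (r ^ (-s) * Real.Gamma s + r ^ (-(s + β)) * Real.Gamma (s + β)) := by
        rw [integral_const_mul, integral_add (integrableOn_rpow_mul_exp_neg_mul hs hr0)
          (integrableOn_rpow_mul_exp_neg_mul hsβ hr0), hΓ hs, hΓ hsβ]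
    _ ≤ 2 ^ β * (r ^ (-s) * Real.Gamma s + r ^ (-s) * Real.Gamma (s + β)) := by
        have := Real.Gamma_pos_of_pos hsβ
        gcongr
        linarith
    _ = 2 ^ β * (Real.Gamma s + Real.Gamma (s + β)) * r ^ (-s) := by ring

end GammaMajorant

section CpowDifference

variable {c : ℂ}

lemma norm_le_norm_ofReal_add (hc : 0 ≤ c.re) {t : ℝ} (ht : 0 ≤ t) : ‖c‖ ≤ ‖(t : ℂ) + c‖ := by
  rw [← sq_le_sq₀ (norm_nonneg _) (norm_nonneg _), Complex.sq_norm, Complex.sq_norm,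
    Complex.normSq_apply, Complex.normSq_apply]
  simp only [add_re, ofReal_re, add_im, ofReal_im, zero_add]
  nlinarith

lemma ofReal_add_mem_slitPlane (hc0 : c ≠ 0) (hc : 0 ≤ c.re) {t : ℝ} (ht : 0 ≤ t) :
    (t : ℂ) + c ∈ slitPlane := by
  rw [mem_slitPlane_iff]
  rcases hc.lt_or_eq with hre | hre
  · left; simp only [add_re, ofReal_re]; linarith
  · right
    simp only [add_im, ofReal_im, zero_add]
    intro him
    exact hc0 (Complex.ext hre.symm him)

theorem norm_ofReal_add_cpow_sub_cpow_le (hc0 : c ≠ 0) (hc : 0 ≤ c.re) (a : ℝ) {y M : ℝ}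
    (hy : 0 ≤ y) (hM : ∀ t ∈ Icc 0 y, ‖(t : ℂ) + c‖ ^ (a - 1) ≤ M) :
    ‖((y : ℂ) + c) ^ (a : ℂ) - c ^ (a : ℂ)‖ ≤ |a| * M * y := by
  have hderiv : ∀ t ∈ Icc 0 y, HasDerivWithinAt (fun t : ℝ => ((t : ℂ) + c) ^ (a : ℂ))
      ((a : ℂ) * ((t : ℂ) + c) ^ ((a : ℂ) - 1)) (Icc 0 y) t := fun t ht => by
    simpa using (((hasDerivAt_id (t : ℂ)).add_const c).cpow_const
      (ofReal_add_mem_slitPlane hc0 hc ht.1)).comp_ofReal.hasDerivWithinAt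
  have hbound : ∀ t ∈ Ico 0 y, ‖(a : ℂ) * ((t : ℂ) + c) ^ ((a : ℂ) - 1)‖ ≤ |a| * M := by
    intro t ht
    rw [norm_mul, norm_real, Real.norm_eq_abs,
      show (a : ℂ) - 1 = ((a - 1 : ℝ) : ℂ) by push_cast; ring, norm_cpow_real]
    gcongr
    exact hM t (Ico_subset_Icc_self ht)
  simpa using norm_image_sub_le_of_norm_deriv_le_segment' hderiv hbound y (right_mem_Icc.2 hy)

end CpowDifference

/-- `E_±(r)` is `besselError ((n - 4) / 2) (±2i) r`. -/
def besselError (a : ℝ) (c : ℂ) (r : ℝ) : ℂ :=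
  ∫ y in Ioi (0 : ℝ), exp (-(ofReal (r * y))) * (y : ℂ) ^ (a : ℂ) *
    (((y : ℂ) + c) ^ (a : ℂ) - c ^ (a : ℂ))

theorem norm_besselError_le {a r : ℝ} {c : ℂ} (ha : -2 < a) (hc : 1 ≤ ‖c‖) (hre : 0 ≤ c.re)
    (hr : 1 ≤ r) :
    ‖besselError a c r‖ ≤ |a| * ‖c‖ ^ (a - 1) * (2 ^ max (a - 1) 0 *
      (Real.Gamma (a + 2) + Real.Gamma (a + 2 + max (a - 1) 0))) * r ^ (-(a + 2)) := by
  set β := max (a - 1) 0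
  have hc0 : c ≠ 0 := norm_pos_iff.1 (by linarith)
  have hpt : ∀ y ∈ Ioi (0 : ℝ), ‖exp (-(ofReal (r * y))) * (y : ℂ) ^ (a : ℂ) *
      (((y : ℂ) + c) ^ (a : ℂ) - c ^ (a : ℂ))‖ ≤
      |a| * ‖c‖ ^ (a - 1) * (y ^ (a + 2 - 1) * (1 + y) ^ β * Real.exp (-(r * y))) := by
    intro y (hy : 0 < y)
    have hdiff := norm_ofReal_add_cpow_sub_cpow_le hc0 hre a hy.le fun t ht =>
      rpow_le_rpow_mul_one_add_rpow_max (γ := a - 1) hc (norm_le_norm_ofReal_add hre ht.1)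
        ((norm_add_le _ _).trans (by rw [norm_real, Real.norm_of_nonneg ht.1]; linarith [ht.2]))
    rw [norm_mul, norm_mul, norm_exp, norm_cpow_real, norm_real, Real.norm_of_nonneg hy.le,
      show a + 2 - 1 = a + 1 by ring, Real.rpow_add_one hy.ne']
    simp only [neg_re, ofReal_re]
    calc Real.exp (-(r * y)) * y ^ a * ‖((y : ℂ) + c) ^ (a : ℂ) - c ^ (a : ℂ)‖
        ≤ Real.exp (-(r * y)) * y ^ a * (|a| * (‖c‖ ^ (a - 1) * (1 + y) ^ β) * y) := by
          gcongr
      _ = _ := by ring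
  calc ‖besselError a c r‖
      ≤ ∫ y in Ioi 0,
          |a| * ‖c‖ ^ (a - 1) * (y ^ (a + 2 - 1) * (1 + y) ^ β * Real.exp (-(r * y))) :=
        norm_integral_le_of_norm_le
          ((integrableOn_rpow_mul_one_add_rpow_mul_exp_neg_mul (by linarith) (le_max_right _ _)
            (by linarith)).const_mul _)
          ((ae_restrict_iff' measurableSet_Ioi).2 (Filter.Eventually.of_forall hpt))
    _ ≤ _ := by
        rw [integral_const_mul, mul_assoc _ _ (r ^ _)]
        gcongr
        exact integral_rpow_mul_one_add_rpow_mul_exp_neg_mul_le (by linarith) (le_max_right _ _) hr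

/-- the Bessel-expansion error integrals
`E_±(r) = ∫₀^∞ e^{-ry} y^{(n-4)/2} [(y ± 2i)^{(n-4)/2} − (±2i)^{(n-4)/2}] dy`
satisfy `|E_±(r)| ≤ C r^{-n/2}` for all `r ≥ 1`, with `C` depending only on `n`. -/
theorem stmt16 (n : ℕ) (hn : 3 ≤ n) :
    ∃ C : ℝ, 0 < C ∧ ∀ r : ℝ, 1 ≤ r →
      ‖∫ y in Set.Ioi (0 : ℝ),
          Complex.exp (-(Complex.ofReal (r * y))) * (y : ℂ) ^ (((n : ℂ) - 4) / 2) *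
            (((y : ℂ) + 2 * Complex.I) ^ (((n : ℂ) - 4) / 2) -
              (2 * Complex.I) ^ (((n : ℂ) - 4) / 2))‖ ≤ C * r ^ (-(n : ℝ) / 2) ∧
      ‖∫ y in Set.Ioi (0 : ℝ),
          Complex.exp (-(Complex.ofReal (r * y))) * (y : ℂ) ^ (((n : ℂ) - 4) / 2) *
            (((y : ℂ) - 2 * Complex.I) ^ (((n : ℂ) - 4) / 2) -
              (-(2 * Complex.I)) ^ (((n : ℂ) - 4) / 2))‖ ≤ C * r ^ (-(n : ℝ) / 2) := by
  set a : ℝ := ((n : ℝ) - 4) / 2 with ha_def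
  have ha : -2 < a := by
    have : (3 : ℝ) ≤ n := by exact_mod_cast hn
    linarith
  have hexp : ((n : ℂ) - 4) / 2 = (a : ℂ) := by rw [ha_def]; push_cast; ring
  set K := |a| * 2 ^ (a - 1) * (2 ^ max (a - 1) 0 *
    (Real.Gamma (a + 2) + Real.Gamma (a + 2 + max (a - 1) 0)))
  refine ⟨max K 1, lt_max_of_lt_right one_pos, fun r hr => ?_⟩
  have hbound : ∀ c : ℂ, ‖c‖ = 2 → c.re = 0 →
      ‖besselError a c r‖ ≤ max K 1 * r ^ (-(n : ℝ) / 2) :=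
    fun c hc hre => (norm_besselError_le ha (by rw [hc]; norm_num) hre.ge hr).trans <| by
      rw [hc, show -(a + 2) = -(n : ℝ) / 2 by ring]
      gcongr
      exact le_max_left _ _
  rw [hexp]
  exact ⟨hbound (2 * I) (by simp) (by simp),
    by simpa only [besselError, sub_eq_add_neg] using hbound (-(2 * I)) (by simp) (by simp)⟩
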